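/- For any orthogonal projection P on a Hilbert space H, the set F_P = { T ∈ T(H)⁺₁ : T = P T P } is a face of T(H)⁺₁: it is convex, and if T ∈ F_P and T = w·T₁ + (1-w)·T₂ with w ∈ (0,1), T₁, T₂ ∈ T(H)⁺₁, then T₁ ∈ F_P and T₂ ∈ F_P. -/

import Mathlib

/-!
With `Q = 1 - P`, the condition `T = P T P` for a positive `T` is equivalent to `Q T Q = 0`.
If `T = w T₁ + (1 - w) T₂`, then `Q T Q` is a sum of the positive operators `w Q T₁ Q` and
`(1 - w) Q T₂ Q`, so both vanish. Writing `Tᵢ = R* R`, the C*-identity turns `Q R* R Q = 0` into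
`R Q = 0`, hence `Tᵢ Q = 0`, i.e. `Tᵢ = Tᵢ P`; taking adjoints gives `Tᵢ = P Tᵢ = P Tᵢ P`.
-/

open scoped InnerProductSpace
open ContinuousLinearMap
variable {H : Type*} [NormedAddCommGroup H] [InnerProductSpace ℂ H] [CompleteSpace H] {ι : Type*}

/-- `T` is a quantum state: a positive trace-class operator with trace 1,
the trace being computed in the Hilbert basis `b`. -/
def IsState (b : HilbertBasis ι ℂ H) (T : H →L[ℂ] H) : Prop :=
  T.IsPositive ∧ HasSum (fun i => (⟪ b i, T (b i)⟫_ℂ).re) 1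

section NonUnital

variable {A : Type*} [NonUnitalCStarAlgebra A] [PartialOrder A] [StarOrderedRing A]

theorem mul_eq_zero_of_star_mul_mul_eq_zero {a c : A} (ha : 0 ≤ a) (h : star c * a * c = 0) :
    a * c = 0 := by
  obtain ⟨r, rfl⟩ := CStarAlgebra.nonneg_iff_eq_star_mul_self.mp ha
  have hrc : r * c = 0 := by
    rw [← CStarRing.star_mul_self_eq_zero_iff, star_mul, ← h]
    noncomm_ring
  rw [mul_assoc, hrc, mul_zero]

theorem mul_eq_zero_of_star_mul_add_mul_eq_zero {a b c : A} (ha : 0 ≤ a) (hb : 0 ≤ b)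
    (h : star c * (a + b) * c = 0) : a * c = 0 ∧ b * c = 0 := by
  rw [mul_add, add_mul] at h
  obtain ⟨hac, hbc⟩ := (add_eq_zero_iff_of_nonneg (star_left_conjugate_nonneg ha c)
    (star_left_conjugate_nonneg hb c)).mp h
  exact ⟨mul_eq_zero_of_star_mul_mul_eq_zero ha hac, mul_eq_zero_of_star_mul_mul_eq_zero hb hbc⟩

end NonUnital

namespace IsStarProjection

theorem eq_mul_mul_of_mul_one_sub_eq_zero {R : Type*} [Ring R] [StarRing R] {p a : R}
    (hp : IsStarProjection p) (ha : IsSelfAdjoint a) (h : a * (1 - p) = 0) :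
    a = p * a * p := by
  have hap : a = a * p := by rwa [mul_sub, mul_one, sub_eq_zero] at h
  have hpa : a = p * a := by
    simpa only [star_mul, ha.star_eq, hp.isSelfAdjoint.star_eq] using congrArg star hap
  rw [mul_assoc, ← hap, ← hpa]

theorem eq_mul_mul_of_add_eq_mul_mul {A : Type*} [CStarAlgebra A] [PartialOrder A]
    [StarOrderedRing A] {p a b : A} (hp : IsStarProjection p) (ha : 0 ≤ a) (hb : 0 ≤ b)
    (h : a + b = p * (a + b) * p) : a = p * a * p ∧ b = p * b * p := by
  have hq : star (1 - p) * (a + b) * (1 - p) = 0 := by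
    rw [hp.one_sub.isSelfAdjoint.star_eq, h, ← mul_assoc, ← mul_assoc, hp.one_sub_mul_self]
    simp only [zero_mul]
  obtain ⟨haq, hbq⟩ := mul_eq_zero_of_star_mul_add_mul_eq_zero ha hb hq
  exact ⟨hp.eq_mul_mul_of_mul_one_sub_eq_zero ha.isSelfAdjoint haq,
    hp.eq_mul_mul_of_mul_one_sub_eq_zero hb.isSelfAdjoint hbq⟩

end IsStarProjection

theorem eq_mul_mul_of_smul_eq_mul_mul {R A : Type*} [Semiring R] [IsCancelMulZero R] [Semiring A]
    [Module R A] [SMulCommClass R A A] [IsScalarTower R A A] [Module.IsTorsionFree R A]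
    {r : R} {a p q : A}
    (hr : r ≠ 0) (h : r • a = p * (r • a) * q) : a = p * a * q := by
  rw [mul_smul_comm, smul_mul_assoc] at h
  exact smul_right_injective A hr h

/-- for an orthogonal projection `P`, the set
`F_P = { T ∈ T(H)⁺₁ : T = P T P }` is a face of the state space: it is convex
and closed under taking convex components. -/
theorem face_of_projection (b : HilbertBasis ι ℂ H) (P : H →L[ℂ] H)
    (hP1 : IsIdempotentElem P) (hP2 : IsSelfAdjoint P) :
    (∀ T T' : H →L[ℂ] H, IsState b T → T = P ∘L T ∘L P → IsState b T' → T' = P ∘L T' ∘L P →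
      ∀ w : ℝ, 0 ≤ w → w ≤ 1 →
        w • T + (1 - w) • T' = P ∘L (w • T + (1 - w) • T') ∘L P) ∧
    (∀ T T₁ T₂ : H →L[ℂ] H, IsState b T → T = P ∘L T ∘L P →
      IsState b T₁ → IsState b T₂ → ∀ w : ℝ, 0 < w → w < 1 →
        T = w • T₁ + (1 - w) • T₂ → T₁ = P ∘L T₁ ∘L P ∧ T₂ = P ∘L T₂ ∘L P) := by
  refine ⟨fun T T' _ hT _ hT' w _ _ => ?_, fun T T₁ T₂ _ hT hT₁ hT₂ w hw0 hw1 hdec => ?_⟩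
  · calc w • T + (1 - w) • T' = w • (P ∘L T ∘L P) + (1 - w) • (P ∘L T' ∘L P) := by
          rw [← hT, ← hT']
      _ = P ∘L (w • T + (1 - w) • T') ∘L P := by
          simp only [comp_add, add_comp, comp_smul, smul_comp]
  · have hw1' : 0 < 1 - w := sub_pos.mpr hw1
    have hT₁pos : 0 ≤ w • T₁ := smul_nonneg hw0.le ((nonneg_iff_isPositive T₁).mpr hT₁.1)
    have hT₂pos : 0 ≤ (1 - w) • T₂ :=
      smul_nonneg hw1'.le ((nonneg_iff_isPositive T₂).mpr hT₂.1)
    obtain ⟨h₁, h₂⟩ :=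
      IsStarProjection.eq_mul_mul_of_add_eq_mul_mul ⟨hP1, hP2⟩ hT₁pos hT₂pos (hdec ▸ hT)
    exact ⟨eq_mul_mul_of_smul_eq_mul_mul hw0.ne' h₁, eq_mul_mul_of_smul_eq_mul_mul hw1'.ne' h₂⟩
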